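/- Define χ_n := ω_n − ∑_{k=0}^{n} 1/√(2k+1). Then χ_n = −Z_0(1/2) + O(1/√n) as n → ∞; that is, there exists a constant C > 0 such that |χ_n + (1 − 2^{−1/2})·ζ(1/2)| ≤ C/√n for all n ≥ 1, where ζ(1/2) denotes the value at s = 1/2 of the analytic continuation of the Riemann zeta function (equivalently, ζ(1/2) = lim_{n→∞} (∑_{k=1}^{n} 1/√k − 2√n)) and Z_0(1/2) = (1 − 2^{−1/2})ζ(1/2). -/

import Mathlib

open Real Finset

/-- The sequence `ω_n`. -/
noncomputable def omega (n : ℕ) : ℝ :=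
  if Odd n then
    ((2 * (n : ℝ) + 3) / ((n : ℝ) + 1)) * Real.Gamma ((n : ℝ) / 2 + 1) /
      Real.Gamma (((n : ℝ) + 1) / 2)
  else
    ((n : ℝ) + 1) * Real.Gamma (((n : ℝ) + 1) / 2) / Real.Gamma ((n : ℝ) / 2 + 1)

/-- The sequence `χ_n = ω_n - ∑_{k=0}^n 1/√(2k+1)`. -/
noncomputable def chi (n : ℕ) : ℝ :=
  omega n - ∑ k ∈ Finset.range (n + 1), 1 / Real.sqrt (2 * (k : ℝ) + 1)

open Filter Complex Set


noncomputable def Dterm (s : ℂ) (k : ℕ) : ℂ :=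
  ((k : ℂ) + 1) ^ (-s) - (((k : ℂ) + 1) ^ (1 - s) - (k : ℂ) ^ (1 - s)) / (1 - s)

noncomputable def Zn (N : ℕ) (s : ℂ) : ℂ :=
  (∑ k ∈ Finset.range N, ((k : ℂ) + 1) ^ (-s)) - ((N : ℂ) ^ (1 - s) - 1) / (1 - s)

noncomputable def Zlim (s : ℂ) : ℂ := 1 + ∑' k : ℕ, Dterm s (k + 1)

lemma Zn_succ (N : ℕ) (s : ℂ) : Zn (N + 1) s = Zn N s + Dterm s N := by
  simp only [Zn, Dterm, Finset.sum_range_succ]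
  push_cast
  ring

lemma Zn_one (s : ℂ) : Zn 1 s = 1 := by
  simp [Zn]

lemma Zn_eq (N : ℕ) (s : ℂ) :
    Zn (N + 1) s = 1 + ∑ k ∈ Finset.range N, Dterm s (k + 1) := by
  induction N with
  | zero => simp [Zn_one]
  | succ n ih => rw [Zn_succ, ih, Finset.sum_range_succ]; ring

-- derivative of y ↦ (y:ℂ)^c for real y ≠ 0, c ≠ 0
lemma hasDerivAt_cpow_aux {x : ℝ} (hx : x ≠ 0) {c : ℂ} (hc : c ≠ 0) :
    HasDerivAt (fun y : ℝ => (y : ℂ) ^ c) (c * (x : ℂ) ^ (c - 1)) x := by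
  have h := hasDerivAt_ofReal_cpow_const' hx (r := c - 1) (by
    intro h
    apply hc
    have : c = -1 + 1 := by rw [← h]; ring
    simpa using this)
  rw [sub_add_cancel] at h
  have h2 := h.const_mul c
  have : (fun y : ℝ => c * ((y : ℂ) ^ c / c)) = fun y : ℝ => (y : ℂ) ^ c := by
    funext y; field_simp
  rw [this] at h2
  exact h2

lemma norm_cpow_of_pos {x : ℝ} (hx : 0 < x) (c : ℂ) : ‖(x : ℂ) ^ c‖ = x ^ c.re := by
  rw [Complex.norm_cpow_eq_rpow_re_of_pos hx]

lemma Dterm_bound {s : ℂ} (hs : 0 < s.re) (hs1 : s ≠ 1) {k : ℕ} (hk : 1 ≤ k) :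
    ‖Dterm s k‖ ≤ ‖s‖ * (k : ℝ) ^ (-s.re - 1) := by
  have hk0 : (0:ℝ) < (k:ℝ) := by exact_mod_cast hk
  set a : ℝ := (k : ℝ) with ha
  set b : ℝ := a + 1 with hb
  have hs0 : s ≠ 0 := by intro h; rw [h] at hs; simp at hs
  have hIcc : ∀ x ∈ Icc a b, (0:ℝ) < x := fun x hx => lt_of_lt_of_le hk0 hx.1
  -- inner bound : ‖(x:ℂ)^(-s) - (b:ℂ)^(-s)‖ ≤ ‖s‖ * a^(-s.re-1) for x ∈ Icc a b
  have inner : ∀ x ∈ Icc a b, ‖(x : ℂ) ^ (-s) - (b : ℂ) ^ (-s)‖ ≤ ‖s‖ * a ^ (-s.re - 1) := by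
    intro x hx
    have hmvt := (convex_Icc a b).norm_image_sub_le_of_norm_hasDerivWithin_le
      (f := fun y : ℝ => (y : ℂ) ^ (-s)) (f' := fun y : ℝ => (-s) * (y : ℂ) ^ (-s - 1))
      (s := Icc a b) (C := ‖s‖ * a ^ (-s.re - 1))
      (fun y hy => ((hasDerivAt_cpow_aux (hIcc y hy).ne' (neg_ne_zero.mpr hs0)).hasDerivWithinAt))
      (fun y hy => by
        rw [norm_mul, norm_neg, norm_cpow_of_pos (hIcc y hy)]
        refine mul_le_mul_of_nonneg_left ?_ (norm_nonneg s)
        rw [show ((-s - 1 : ℂ)).re = -s.re - 1 by simp]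
        exact Real.rpow_le_rpow_of_nonpos hk0 hy.1 (by linarith))
      hx (right_mem_Icc.mpr (by linarith))
    calc ‖(x : ℂ) ^ (-s) - (b : ℂ) ^ (-s)‖ = ‖(b : ℂ) ^ (-s) - (x : ℂ) ^ (-s)‖ := by
          rw [norm_sub_rev]
      _ ≤ ‖s‖ * a ^ (-s.re - 1) * ‖b - x‖ := hmvt
      _ ≤ ‖s‖ * a ^ (-s.re - 1) * 1 := by
          gcongr
          rw [Real.norm_eq_abs, _root_.abs_of_nonneg (by linarith [hx.2])]
          linarith [hx.1]
      _ = ‖s‖ * a ^ (-s.re - 1) := by ring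
  -- outer MVT with g y = y^(1-s)/(1-s) - b^(-s) * y
  have h1s : (1 : ℂ) - s ≠ 0 := sub_ne_zero.mpr (Ne.symm hs1)
  have outer := (convex_Icc a b).norm_image_sub_le_of_norm_hasDerivWithin_le
    (f := fun y : ℝ => (y : ℂ) ^ (1 - s) / (1 - s) - (b : ℂ) ^ (-s) * (y : ℂ))
    (f' := fun y : ℝ => (y : ℂ) ^ (-s) - (b : ℂ) ^ (-s))
    (s := Icc a b) (C := ‖s‖ * a ^ (-s.re - 1))
    (fun y hy => by
      have hd1 := (hasDerivAt_cpow_aux (hIcc y hy).ne' h1s).div_const (1 - s)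
      have hd2 : HasDerivAt (fun y : ℝ => (b : ℂ) ^ (-s) * (y : ℂ)) ((b : ℂ) ^ (-s)) y := by
        simpa using ((hasDerivAt_id (y : ℂ)).comp_ofReal).const_mul ((b : ℂ) ^ (-s))
      have := hd1.sub hd2
      have heq : (1 - s) * (y : ℂ) ^ (1 - s - 1) / (1 - s) = (y : ℂ) ^ (-s) := by
        rw [show (1:ℂ) - s - 1 = -s by ring, mul_comm, mul_div_assoc, div_self h1s, mul_one]
      rw [heq] at this
      exact this.hasDerivWithinAt)
    (fun y hy => inner y hy)
    (left_mem_Icc.mpr (by linarith)) (right_mem_Icc.mpr (by linarith))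
  have hD : Dterm s k = -(((b : ℂ) ^ (1 - s) / (1 - s) - (b : ℂ) ^ (-s) * (b : ℂ)) -
      ((a : ℂ) ^ (1 - s) / (1 - s) - (b : ℂ) ^ (-s) * (a : ℂ))) := by
    simp only [Dterm, hb, ha]
    push_cast
    field_simp
    ring
  rw [hD, norm_neg]
  calc ‖_‖ ≤ ‖s‖ * a ^ (-s.re - 1) * ‖b - a‖ := outer
    _ = ‖s‖ * a ^ (-s.re - 1) := by
        simp [hb]

lemma summable_aux {p : ℝ} (hp : 1 < p) : Summable (fun k : ℕ => ((k : ℝ) + 1) ^ (-p)) := by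
  have h := Real.summable_one_div_nat_rpow.mpr hp
  have h2 := (summable_nat_add_iff 1).mpr h
  refine h2.congr fun k => ?_
  rw [Real.rpow_neg (by positivity), one_div]
  push_cast
  ring_nf

lemma summable_Dterm {s : ℂ} (hs : 0 < s.re) (hs1 : s ≠ 1) :
    Summable (fun k : ℕ => Dterm s (k + 1)) := by
  apply Summable.of_norm_bounded (g := fun k : ℕ => ‖s‖ * ((k : ℝ) + 1) ^ (-(s.re + 1)))
  · exact (summable_aux (by linarith)).mul_left _
  · intro k
    have := Dterm_bound hs hs1 (k := k + 1) (by omega)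
    calc ‖Dterm s (k + 1)‖ ≤ ‖s‖ * ((k + 1 : ℕ) : ℝ) ^ (-s.re - 1) := this
      _ = ‖s‖ * ((k : ℝ) + 1) ^ (-(s.re + 1)) := by push_cast; ring_nf

lemma tendsto_Zn_Zlim {s : ℂ} (hs : 0 < s.re) (hs1 : s ≠ 1) :
    Filter.Tendsto (fun N => Zn (N + 1) s) atTop (nhds (Zlim s)) := by
  have h := (summable_Dterm hs hs1).hasSum.tendsto_sum_nat
  have h2 := h.const_add (1 : ℂ)
  refine h2.congr fun N => ?_
  rw [Zn_eq]

lemma tendsto_cpow_natCast_add_one {s : ℂ} (hs : s.re < 0) :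
    Filter.Tendsto (fun N : ℕ => ((N : ℂ) + 1) ^ s) atTop (nhds 0) := by
  rw [tendsto_zero_iff_norm_tendsto_zero]
  have : ∀ N : ℕ, ‖((N : ℂ) + 1) ^ s‖ = ((N : ℝ) + 1) ^ s.re := by
    intro N
    have : ((N : ℂ) + 1) = (((N : ℝ) + 1 : ℝ) : ℂ) := by push_cast; ring
    rw [this, norm_cpow_of_pos (by positivity)]
  simp only [this]
  have h1 : Filter.Tendsto (fun x : ℝ => x ^ (-(-s.re))) atTop (nhds 0) :=
    tendsto_rpow_neg_atTop (by linarith)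
  simp only [neg_neg] at h1
  exact h1.comp (tendsto_atTop_add_const_right _ 1 tendsto_natCast_atTop_atTop)

lemma Zlim_eq_zeta {s : ℂ} (hs : 1 < s.re) :
    Zlim s = riemannZeta s + 1 / (1 - s) := by
  have hs0 : 0 < s.re := by linarith
  have hs1 : s ≠ 1 := by intro h; rw [h] at hs; simp at hs
  refine tendsto_nhds_unique (tendsto_Zn_Zlim hs0 hs1) ?_
  -- Zn (N+1) s → ζ s + 1/(1-s)
  have hsum : Summable (fun k : ℕ => ((k : ℂ) + 1) ^ (-s)) := by
    apply Summable.of_norm_bounded (g := fun k : ℕ => ((k : ℝ) + 1) ^ (-s.re))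
    · exact summable_aux hs
    · intro k
      have : ((k : ℂ) + 1) = (((k : ℝ) + 1 : ℝ) : ℂ) := by push_cast; ring
      rw [this, norm_cpow_of_pos (by positivity)]
      simp
  have hzeta : riemannZeta s = ∑' k : ℕ, ((k : ℂ) + 1) ^ (-s) := by
    rw [zeta_eq_tsum_one_div_nat_add_one_cpow hs]
    congr 1; funext k
    rw [cpow_neg, one_div]
  have t1 : Filter.Tendsto (fun N : ℕ => ∑ k ∈ Finset.range (N + 1), ((k : ℂ) + 1) ^ (-s))
      atTop (nhds (riemannZeta s)) := by
    rw [hzeta]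
    exact hsum.hasSum.tendsto_sum_nat.comp (tendsto_add_atTop_nat 1)
  have t2 : Filter.Tendsto (fun N : ℕ => ((((N : ℕ) + 1 : ℕ) : ℂ) ^ (1 - s) - 1) / (1 - s))
      atTop (nhds ((0 - 1) / (1 - s))) := by
    apply Filter.Tendsto.div_const
    apply Filter.Tendsto.sub_const
    have := tendsto_cpow_natCast_add_one (s := 1 - s) (by simp; linarith)
    refine this.congr fun N => by push_cast; ring_nf
  have := t1.sub t2
  have heq : riemannZeta s - (0 - 1) / (1 - s) = riemannZeta s + 1 / (1 - s) := by ring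
  rw [heq] at this
  refine this.congr fun N => ?_
  rw [Zn]
section piece3

def Uset : Set ℂ := {s : ℂ | 0 < s.re ∧ s ≠ 1}

lemma isOpen_Uset : IsOpen Uset := by
  have h1 : IsOpen {s : ℂ | 0 < s.re} := isOpen_lt continuous_const Complex.continuous_re
  have h2 : IsOpen {s : ℂ | s ≠ 1} := isOpen_compl_singleton
  exact h1.inter h2

lemma differentiableAt_Dterm {k : ℕ} (s : ℂ) (hs1 : s ≠ 1) :
    DifferentiableAt ℂ (fun z => Dterm z (k + 1)) s := by
  have hb : ((k : ℂ) + 1 + 1) ≠ 0 := by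
    intro h
    have := congrArg Complex.re h
    push_cast at this
    simp at this
    linarith [Nat.cast_nonneg (α := ℝ) k]
  have hb2 : ((k : ℂ) + 1) ≠ 0 := by
    intro h
    have := congrArg Complex.re h
    push_cast at this
    simp at this
    linarith [Nat.cast_nonneg (α := ℝ) k]
  have h1s : (1 : ℂ) - s ≠ 0 := sub_ne_zero.mpr (Ne.symm hs1)
  simp only [Dterm]
  push_cast
  apply DifferentiableAt.sub
  · exact (differentiableAt_id.neg).const_cpow (Or.inl hb)
  · apply DifferentiableAt.div
    · apply DifferentiableAt.sub
      · exact ((differentiableAt_const _).sub differentiableAt_id).const_cpow (Or.inl hb)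
      · exact ((differentiableAt_const _).sub differentiableAt_id).const_cpow (Or.inl hb2)
    · exact (differentiableAt_const _).sub differentiableAt_id
    · exact h1s

lemma differentiableAt_Zlim {s₀ : ℂ} (hs₀ : s₀ ∈ Uset) : DifferentiableAt ℂ Zlim s₀ := by
  obtain ⟨hre, hne⟩ := hs₀
  set δ : ℝ := s₀.re / 2 with hδ
  set B : ℝ := ‖s₀‖ + 1 with hB
  have hδ0 : 0 < δ := by simp only [hδ]; linarith
  set W : Set ℂ := {s : ℂ | δ < s.re ∧ ‖s‖ < B ∧ s ≠ 1} with hW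
  have hWopen : IsOpen W := by
    have h1 : IsOpen {s : ℂ | δ < s.re} := isOpen_lt continuous_const Complex.continuous_re
    have h2 : IsOpen {s : ℂ | ‖s‖ < B} := isOpen_lt continuous_norm continuous_const
    have h3 : IsOpen {s : ℂ | s ≠ 1} := isOpen_compl_singleton
    exact h1.inter (h2.inter h3)
  have hs₀W : s₀ ∈ W := by
    refine ⟨by simp only [hδ]; linarith, by simp only [hB]; linarith, hne⟩
  have hdiff : DifferentiableOn ℂ (fun z => ∑' k : ℕ, Dterm z (k + 1)) W := by
    apply differentiableOn_tsum_of_summable_norm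
      (u := fun k : ℕ => B * ((k : ℝ) + 1) ^ (-(δ + 1)))
    · exact (summable_aux (p := δ + 1) (by linarith)).mul_left _
    · exact fun k => fun s hs => differentiableAt_Dterm s hs.2.2 |>.differentiableWithinAt
    · exact hWopen
    · intro k s hs
      obtain ⟨h1, h2, h3⟩ := hs
      have hb := Dterm_bound (s := s) (by linarith) h3 (k := k + 1) (by omega)
      refine hb.trans ?_
      have hbase : (1:ℝ) ≤ ((k + 1 : ℕ) : ℝ) := by exact_mod_cast Nat.one_le_iff_ne_zero.mpr (by omega)
      calc ‖s‖ * ((k + 1 : ℕ) : ℝ) ^ (-s.re - 1)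
          ≤ B * ((k + 1 : ℕ) : ℝ) ^ (-(δ + 1)) := by
            apply mul_le_mul (le_of_lt h2)
            · exact Real.rpow_le_rpow_of_exponent_le hbase (by linarith)
            · positivity
            · linarith [norm_nonneg s]
        _ = B * ((k : ℝ) + 1) ^ (-(δ + 1)) := by push_cast; ring_nf
  have : DifferentiableAt ℂ (fun z => ∑' k : ℕ, Dterm z (k + 1)) s₀ :=
    (hdiff.differentiableAt (hWopen.mem_nhds hs₀W))
  unfold Zlim; exact (differentiableAt_const (1:ℂ)).add this

lemma isPreconnected_Uset : IsPreconnected Uset := by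
  have hc : ∀ r : ℝ, Convex ℝ {s : ℂ | r < s.re} := fun r => convex_halfSpace_re_gt r
  have him_gt : Convex ℝ {s : ℂ | 0 < s.im} := convex_halfSpace_im_gt 0
  have him_lt : Convex ℝ {s : ℂ | s.im < 0} := convex_halfSpace_im_lt 0
  set U1 : Set ℂ := {s : ℂ | 0 < s.re ∧ s.re < 1} with hU1
  set U2 : Set ℂ := {s : ℂ | 0 < s.re ∧ 0 < s.im} with hU2
  set U3 : Set ℂ := {s : ℂ | 0 < s.re ∧ s.im < 0} with hU3
  set U4 : Set ℂ := {s : ℂ | 1 < s.re} with hU4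
  have p1 : IsPreconnected U1 :=
    ((hc 0).inter (convex_halfSpace_re_lt 1)).isPreconnected
  have p2 : IsPreconnected U2 := ((hc 0).inter him_gt).isPreconnected
  have p3 : IsPreconnected U3 := ((hc 0).inter him_lt).isPreconnected
  have p4 : IsPreconnected U4 := (hc 1).isPreconnected
  have h12 : IsPreconnected (U1 ∪ U2) := by
    apply IsPreconnected.union ((1:ℂ)/2 + Complex.I/2) _ _ p1 p2
    · constructor <;> norm_num
    · constructor <;> norm_num
  have h124 : IsPreconnected ((U1 ∪ U2) ∪ U4) := by
    apply IsPreconnected.union ((2:ℂ) + Complex.I) _ _ h12 p4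
    · right; constructor <;> norm_num
    · simp [hU4]
  have h1234 : IsPreconnected (((U1 ∪ U2) ∪ U4) ∪ U3) := by
    apply IsPreconnected.union ((1:ℂ)/2 - Complex.I/2) _ _ h124 p3
    · left; left; constructor <;> norm_num
    · constructor <;> norm_num
  have : Uset = ((U1 ∪ U2) ∪ U4) ∪ U3 := by
    ext s
    simp only [Uset, Set.mem_setOf_eq, Set.mem_union, hU1, hU2, hU3, hU4]
    constructor
    · rintro ⟨hre, hne⟩
      rcases lt_trichotomy s.im 0 with h | h | h
      · right; exact ⟨hre, h⟩
      · rcases lt_trichotomy s.re 1 with h' | h' | h'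
        · left; left; left; exact ⟨hre, h'⟩
        · exfalso; apply hne; exact Complex.ext h' h
        · left; right; exact h'
      · left; left; right; exact ⟨hre, h⟩
    · rintro ((( ⟨h1, h2⟩ | ⟨h1, h2⟩) | h) | ⟨h1, h2⟩)
      · exact ⟨h1, fun he => by rw [he] at h2; simp at h2⟩
      · exact ⟨h1, fun he => by rw [he] at h2; simp at h2⟩
      · exact ⟨by linarith, fun he => by rw [he] at h; simp at h⟩
      · exact ⟨h1, fun he => by rw [he] at h2; simp at h2⟩
  rw [this]
  exact h1234

lemma Zlim_eq_zeta_on_Uset : ∀ s ∈ Uset, Zlim s = riemannZeta s + 1 / (1 - s) := by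
  have hZd : DifferentiableOn ℂ Zlim Uset :=
    fun s hs => (differentiableAt_Zlim hs).differentiableWithinAt
  have hZa : AnalyticOnNhd ℂ Zlim Uset := hZd.analyticOnNhd isOpen_Uset
  have hza : AnalyticOnNhd ℂ (fun s => riemannZeta s + 1 / (1 - s)) Uset := by
    refine DifferentiableOn.analyticOnNhd (fun s hs => ?_) isOpen_Uset
    have h1s : (1 : ℂ) - s ≠ 0 := sub_ne_zero.mpr (Ne.symm hs.2)
    exact ((differentiableAt_riemannZeta hs.2).add
      (((differentiableAt_const _).div ((differentiableAt_const _).sub differentiableAt_id)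
        h1s))).differentiableWithinAt
  have h2U : (2 : ℂ) ∈ Uset := by constructor <;> simp [Uset]
  have hev : Zlim =ᶠ[nhds (2 : ℂ)] (fun s => riemannZeta s + 1 / (1 - s)) := by
    have hopen : IsOpen {s : ℂ | 1 < s.re} := isOpen_lt continuous_const Complex.continuous_re
    have hmem : {s : ℂ | 1 < s.re} ∈ nhds (2 : ℂ) := hopen.mem_nhds (by simp)
    filter_upwards [hmem] with s hs
    exact Zlim_eq_zeta hs
  exact hZa.eqOn_of_preconnected_of_eventuallyEq hza isPreconnected_Uset h2U hev

lemma Zlim_half : Zlim (1/2 : ℂ) = riemannZeta (1/2) + 2 := by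
  have hmem : (1/2 : ℂ) ∈ Uset := by
    constructor
    · norm_num [Uset]
    · intro h
      have := congrArg Complex.re h
      norm_num at this
  have := Zlim_eq_zeta_on_Uset _ hmem
  rw [this]
  norm_num

end piece3
section piece4

noncomputable def SS (N : ℕ) : ℝ := ∑ k ∈ Finset.range N, 1 / Real.sqrt ((k : ℝ) + 1)

lemma half_complex : (1/2 : ℂ) = (((1:ℝ)/2 : ℝ) : ℂ) := by norm_num

lemma re_half : (1/2 : ℂ).re = 1/2 := by rw [half_complex, Complex.ofReal_re]

lemma norm_half : ‖(1/2 : ℂ)‖ = 1/2 := by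
  rw [half_complex, Complex.norm_real, Real.norm_eq_abs, _root_.abs_of_nonneg (by norm_num : (0:ℝ) ≤ 1/2)]

lemma half_ne_one : (1/2 : ℂ) ≠ 1 := by
  intro h
  have := congrArg Complex.re h
  rw [re_half] at this
  norm_num at this

lemma cpow_neg_half_eq (x : ℝ) (hx : 0 ≤ x) :
    ((x : ℂ)) ^ (-(1/2 : ℂ)) = ((1 / Real.sqrt x : ℝ) : ℂ) := by
  rw [show (-(1/2:ℂ)) = ((-(1/2) : ℝ) : ℂ) by norm_num, ← Complex.ofReal_cpow hx]
  congr 1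
  rw [Real.rpow_neg hx, Real.sqrt_eq_rpow, one_div]
  norm_num

lemma cpow_half_eq (x : ℝ) (hx : 0 ≤ x) :
    ((x : ℂ)) ^ ((1/2 : ℂ)) = ((Real.sqrt x : ℝ) : ℂ) := by
  rw [show ((1/2:ℂ)) = (((1/2) : ℝ) : ℂ) by norm_num, ← Complex.ofReal_cpow hx]
  congr 1
  rw [Real.sqrt_eq_rpow]

lemma Zn_half (N : ℕ) : Zn N (1/2 : ℂ) = ((SS N - 2 * Real.sqrt N + 2 : ℝ) : ℂ) := by
  have h1 : ∑ k ∈ Finset.range N, ((k : ℂ) + 1) ^ (-(1/2 : ℂ))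
      = ((SS N : ℝ) : ℂ) := by
    rw [SS, Complex.ofReal_sum]
    refine Finset.sum_congr rfl fun k _ => ?_
    rw [show ((k:ℂ) + 1) = (((k:ℝ) + 1 : ℝ) : ℂ) by push_cast; ring]
    exact cpow_neg_half_eq _ (by positivity)
  have h2 : ((N : ℂ)) ^ ((1:ℂ) - 1/2) = ((Real.sqrt N : ℝ) : ℂ) := by
    rw [show ((1:ℂ) - 1/2) = (1/2 : ℂ) by norm_num,
      show ((N:ℂ)) = (((N:ℝ)) : ℂ) by push_cast; ring]
    exact cpow_half_eq _ (by positivity)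
  rw [Zn, h1, h2]
  rw [show ((1:ℂ) - 1/2) = (((1:ℝ)/2 : ℝ) : ℂ) by norm_num]
  push_cast
  ring

lemma sqrt_telescope {m : ℕ} (hm : 1 ≤ m) :
    (1/2 : ℝ) * ((m:ℝ) + 1) ^ (-(3/2) : ℝ) ≤ 1 / Real.sqrt m - 1 / Real.sqrt ((m:ℝ) + 1) := by
  have hm0 : (0:ℝ) < m := by exact_mod_cast hm
  set u := Real.sqrt m with hu'
  set v := Real.sqrt ((m:ℝ)+1) with hv'
  have hu : u * u = m := Real.mul_self_sqrt (by positivity)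
  have hv : v * v = (m:ℝ) + 1 := Real.mul_self_sqrt (by positivity)
  have hu0 : 0 < u := Real.sqrt_pos.mpr hm0
  have hv0 : 0 < v := Real.sqrt_pos.mpr (by linarith)
  have huv : u ≤ v := Real.sqrt_le_sqrt (by linarith)
  have hrw : ((m:ℝ) + 1) ^ (-(3/2) : ℝ) = 1 / (((m:ℝ)+1) * v) := by
    rw [Real.rpow_neg (by positivity), show ((3:ℝ)/2) = 1 + 1/2 by norm_num,
      Real.rpow_add (by positivity), Real.rpow_one, ← Real.sqrt_eq_rpow, ← hv', one_div]
  rw [hrw]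
  have key : (v - u) * (v + u) = 1 := by nlinarith
  have h2 : 1 / u - 1 / v = (v - u) / (u * v) := by
    field_simp
  rw [h2, mul_one_div, div_le_div_iff₀ (by positivity) (by positivity)]
  have hvu : 0 < v + u := by linarith
  have h3 : u * v * (v + u) ≤ 2 * (v * v * v) := by nlinarith
  have h4 : (v * v * v) * ((v - u) * (v + u)) = v * v * v := by rw [key, mul_one]
  have h5 : (v - u) * (((m:ℝ) + 1) * v) = (v * v * v) * (v - u) := by rw [← hv]; ring
  rw [h5]
  nlinarith [h3, h4, hvu, mul_pos (mul_pos hv0 hv0) hv0]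

lemma tendsto_one_div_sqrt (c : ℝ) :
    Filter.Tendsto (fun n : ℕ => c / Real.sqrt n) Filter.atTop (nhds 0) := by
  have h : Filter.Tendsto (fun x : ℝ => x ^ (-(1/2) : ℝ)) Filter.atTop (nhds 0) :=
    tendsto_rpow_neg_atTop (by norm_num)
  have h2 := (h.comp tendsto_natCast_atTop_atTop).const_mul c
  rw [mul_zero] at h2
  refine h2.congr fun n => ?_
  simp only [Function.comp_apply]
  rw [Real.rpow_neg (by positivity), Real.sqrt_eq_rpow]
  ring

lemma hasSum_sqrt_telescope (N : ℕ) (hN : 1 ≤ N) :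
    HasSum (fun k : ℕ => 1 / Real.sqrt ((N:ℝ) + k) - 1 / Real.sqrt ((N:ℝ) + k + 1))
      (1 / Real.sqrt N) := by
  have hnn : ∀ k : ℕ, 0 ≤ 1 / Real.sqrt ((N:ℝ) + k) - 1 / Real.sqrt ((N:ℝ) + k + 1) := by
    intro k
    have h1 : Real.sqrt ((N:ℝ) + k) ≤ Real.sqrt ((N:ℝ) + k + 1) := Real.sqrt_le_sqrt (by linarith)
    have h0 : 0 < Real.sqrt ((N:ℝ) + k) := Real.sqrt_pos.mpr (by
      have : (1:ℝ) ≤ (N:ℝ) := by exact_mod_cast hN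
      positivity)
    have := one_div_le_one_div_of_le h0 h1
    linarith
  rw [hasSum_iff_tendsto_nat_of_nonneg hnn]
  have hpartial : ∀ n : ℕ, ∑ k ∈ Finset.range n,
      (1 / Real.sqrt ((N:ℝ) + k) - 1 / Real.sqrt ((N:ℝ) + k + 1))
      = 1 / Real.sqrt N - 1 / Real.sqrt ((N:ℝ) + n) := by
    intro n
    have := Finset.sum_range_sub' (f := fun k : ℕ => 1 / Real.sqrt ((N:ℝ) + k)) (n := n)
    push_cast at this
    rw [show 1 / Real.sqrt N - 1 / Real.sqrt ((N:ℝ) + n) =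
      1 / Real.sqrt ((N:ℝ) + 0) - 1 / Real.sqrt ((N:ℝ) + n) by norm_num, ← this]
    refine Finset.sum_congr rfl fun k _ => ?_
    ring_nf
  simp only [hpartial]
  have h0 : Filter.Tendsto (fun n : ℕ => 1 / Real.sqrt ((N:ℝ) + n)) Filter.atTop (nhds 0) := by
    have h := tendsto_one_div_sqrt 1
    have h2 := h.comp (tendsto_add_atTop_nat N)
    refine h2.congr fun n => ?_
    simp only [Function.comp_apply]
    push_cast
    ring_nf
  have := (tendsto_const_nhds (x := 1 / Real.sqrt N) (f := Filter.atTop (α := ℕ))).sub h0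
  simpa using this
section piece5

set_option maxHeartbeats 1000000 in
lemma zeta_half_bound (N : ℕ) (hN : 1 ≤ N) :
    ‖riemannZeta (1/2) - ((SS N - 2 * Real.sqrt N : ℝ) : ℂ)‖ ≤ 2 / Real.sqrt N := by
  set s : ℂ := (1/2 : ℂ) with hs'
  have hs : 0 < s.re := by rw [hs', re_half]; norm_num
  have hs1 : s ≠ 1 := half_ne_one
  have hsum := summable_Dterm hs hs1
  obtain ⟨M, rfl⟩ : ∃ M, N = M + 1 := ⟨N - 1, by omega⟩
  set N' := M + 1 with hN'
  have hdiff : riemannZeta (1/2) - ((SS N' - 2 * Real.sqrt N' : ℝ) : ℂ)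
      = Zlim s - Zn N' s := by
    rw [hs', Zn_half, Zlim_half]
    push_cast
    ring
  rw [hdiff]
  have hkey : Zlim s - Zn N' s = ∑' i, Dterm s (i + M + 1) := by
    rw [hN', Zn_eq, Zlim]
    have h := Summable.sum_add_tsum_nat_add (f := fun k => Dterm s (k + 1)) M hsum
    calc (1 + ∑' k, Dterm s (k + 1)) - (1 + ∑ k ∈ Finset.range M, Dterm s (k + 1))
        = (∑ k ∈ Finset.range M, Dterm s (k + 1) + ∑' i, Dterm s (i + M + 1))
          - ∑ k ∈ Finset.range M, Dterm s (k + 1) := by rw [h]; ring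
      _ = ∑' i, Dterm s (i + M + 1) := by ring
  rw [hkey]
  have hnorm1 : Summable (fun i => ‖Dterm s (i + M + 1)‖) :=
    (summable_nat_add_iff M).mpr hsum.norm
  have hnorm2 : Summable (fun i => ‖Dterm s (i + (M + 1) + 1)‖) :=
    (summable_nat_add_iff (M + 1)).mpr hsum.norm
  have hDb : ∀ k : ℕ, 1 ≤ k → ‖Dterm s k‖ ≤ (1/2) * (k : ℝ) ^ (-(3/2) : ℝ) := by
    intro k hk
    have h := Dterm_bound hs hs1 hk
    rwa [hs', norm_half, re_half, show (-(1/2) - 1 : ℝ) = -(3/2) by norm_num] at h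
  have htel : ∀ i : ℕ, ‖Dterm s (i + (M + 1) + 1)‖ ≤
      1 / Real.sqrt ((N':ℝ) + i) - 1 / Real.sqrt ((N':ℝ) + i + 1) := by
    intro i
    refine (hDb _ (by omega)).trans ?_
    have h := sqrt_telescope (m := N' + i) (by omega)
    calc (1/2 : ℝ) * ((i + (M + 1) + 1 : ℕ) : ℝ) ^ (-(3/2) : ℝ)
        = (1/2 : ℝ) * (((N' + i : ℕ) : ℝ) + 1) ^ (-(3/2) : ℝ) := by
          congr 2; push_cast [hN']; ring
      _ ≤ 1 / Real.sqrt ((N' + i : ℕ)) - 1 / Real.sqrt (((N' + i : ℕ) : ℝ) + 1) := h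
      _ = 1 / Real.sqrt ((N':ℝ) + i) - 1 / Real.sqrt ((N':ℝ) + i + 1) := by push_cast; ring_nf
  calc ‖∑' i, Dterm s (i + M + 1)‖ ≤ ∑' i, ‖Dterm s (i + M + 1)‖ :=
        norm_tsum_le_tsum_norm hnorm1
    _ = ‖Dterm s (M + 1)‖ + ∑' i, ‖Dterm s (i + 1 + M + 1)‖ := by
        rw [Summable.tsum_eq_zero_add hnorm1]
        norm_num
    _ ≤ (1/2) * ((N' : ℕ) : ℝ) ^ (-(3/2) : ℝ) + ∑' i : ℕ,
        (1 / Real.sqrt ((N':ℝ) + i) - 1 / Real.sqrt ((N':ℝ) + i + 1)) := by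
        have hA : ‖Dterm s (M + 1)‖ ≤ (1/2) * ((N' : ℕ) : ℝ) ^ (-(3/2) : ℝ) := by
          have := hDb (M + 1) (by omega)
          simpa [hN'] using this
        have hsum2 : Summable (fun i => ‖Dterm s (i + 1 + M + 1)‖) :=
          hnorm2.congr (fun i => by simp only [show i + (M + 1) + 1 = i + 1 + M + 1 from by omega])
        have hB : (∑' i, ‖Dterm s (i + 1 + M + 1)‖) ≤ ∑' i : ℕ,
            (1 / Real.sqrt ((N':ℝ) + i) - 1 / Real.sqrt ((N':ℝ) + i + 1)) := by
          refine Summable.tsum_le_tsum (fun i => ?_) hsum2 (hasSum_sqrt_telescope N' (by omega)).summable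
          have h := htel i
          rwa [show i + (M + 1) + 1 = i + 1 + M + 1 from by omega] at h
        linarith
    _ = (1/2) * ((N' : ℕ) : ℝ) ^ (-(3/2) : ℝ) + 1 / Real.sqrt N' := by
        rw [(hasSum_sqrt_telescope N' (by omega)).tsum_eq]
    _ ≤ (1/2) * (1 / Real.sqrt N') + 1 / Real.sqrt N' := by
        gcongr
        have h1 : (1:ℝ) ≤ ((N' : ℕ) : ℝ) := by exact_mod_cast hN
        calc ((N' : ℕ) : ℝ) ^ (-(3/2) : ℝ) ≤ ((N' : ℕ) : ℝ) ^ (-(1/2) : ℝ) :=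
              Real.rpow_le_rpow_of_exponent_le h1 (by norm_num)
          _ = 1 / Real.sqrt N' := by
              rw [Real.rpow_neg (by positivity), Real.sqrt_eq_rpow, one_div]
              norm_num
    _ ≤ 2 / Real.sqrt N' := by
        have h1 : 0 ≤ 1 / Real.sqrt N' := by positivity
        have h2 : (2:ℝ) / Real.sqrt N' = 2 * (1 / Real.sqrt N') := by ring
        rw [h2]
        linarith

noncomputable def Lz : ℝ := (riemannZeta (1/2)).re

lemma zeta_half_real : riemannZeta (1/2) = (Lz : ℂ) := by
  have him : (riemannZeta (1/2)).im = 0 := by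
    have hb : ∀ᶠ N : ℕ in Filter.atTop, |(riemannZeta (1/2)).im| ≤ 2 / Real.sqrt N := by
      rw [Filter.eventually_atTop]
      refine ⟨1, fun N hN => ?_⟩
      have h := zeta_half_bound N hN
      calc |(riemannZeta (1/2)).im|
          = |(riemannZeta (1/2) - ((SS N - 2 * Real.sqrt N : ℝ) : ℂ)).im| := by
            rw [Complex.sub_im, Complex.ofReal_im, sub_zero]
        _ ≤ ‖riemannZeta (1/2) - ((SS N - 2 * Real.sqrt N : ℝ) : ℂ)‖ := by
            exact Complex.abs_im_le_norm _
        _ ≤ 2 / Real.sqrt N := h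
    have hlim := tendsto_one_div_sqrt 2
    have h0 : |(riemannZeta (1/2)).im| ≤ 0 :=
      le_of_tendsto_of_tendsto tendsto_const_nhds hlim hb
    exact abs_eq_zero.mp (le_antisymm h0 (abs_nonneg _))
  refine Complex.ext ?_ ?_
  · rw [Complex.ofReal_re]; rfl
  · rw [Complex.ofReal_im]; exact him

lemma SS_bound (N : ℕ) (hN : 1 ≤ N) :
    |SS N - 2 * Real.sqrt N - Lz| ≤ 2 / Real.sqrt N := by
  have h := zeta_half_bound N hN
  rw [zeta_half_real] at h
  rw [show (Lz : ℂ) - ((SS N - 2 * Real.sqrt N : ℝ) : ℂ)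
    = ((Lz - (SS N - 2 * Real.sqrt N) : ℝ) : ℂ) by push_cast; ring] at h
  rw [Complex.norm_real, Real.norm_eq_abs] at h
  rw [show SS N - 2 * Real.sqrt N - Lz = -(Lz - (SS N - 2 * Real.sqrt N)) by ring, abs_neg]
  exact h

end piece5
section piece6


open Real

lemma Gamma_half_le {x : ℝ} (hx : 0 < x) :
    Real.Gamma (x + 1/2) ≤ Real.Gamma x * Real.sqrt x := by
  have hΓx := Real.Gamma_pos_of_pos hx
  have hΓx1 := Real.Gamma_pos_of_pos (by linarith : (0:ℝ) < x + 1)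
  have hΓh := Real.Gamma_pos_of_pos (by linarith : (0:ℝ) < x + 1/2)
  have hsx : 0 < Real.sqrt x := Real.sqrt_pos.mpr hx
  have hc := Real.convexOn_log_Gamma.2 (Set.mem_Ioi.mpr hx)
    (Set.mem_Ioi.mpr (by linarith : (0:ℝ) < x + 1))
    (by norm_num : (0:ℝ) ≤ 1/2) (by norm_num : (0:ℝ) ≤ 1/2) (by norm_num)
  simp only [Function.comp_apply, smul_eq_mul] at hc
  rw [show (1/2 : ℝ) * x + (1/2 : ℝ) * (x + 1) = x + 1/2 by ring] at hc
  rw [Real.Gamma_add_one hx.ne', Real.log_mul hx.ne' hΓx.ne'] at hc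
  have hlog : Real.log (Real.Gamma x * Real.sqrt x)
      = Real.log (Real.Gamma x) + Real.log x / 2 := by
    rw [Real.log_mul hΓx.ne' hsx.ne', Real.log_sqrt hx.le]
  rw [← Real.log_le_log_iff hΓh (by positivity), hlog]
  linarith [hc]

lemma ratio_lower {x : ℝ} (hx : 0 < x) :
    Real.sqrt x ≤ Real.Gamma (x + 1) / Real.Gamma (x + 1/2) := by
  have hΓx := Real.Gamma_pos_of_pos hx
  have hΓh := Real.Gamma_pos_of_pos (by linarith : (0:ℝ) < x + 1/2)
  have hsx : 0 < Real.sqrt x := Real.sqrt_pos.mpr hx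
  have h := Gamma_half_le hx
  rw [Real.Gamma_add_one hx.ne']
  calc Real.sqrt x = x * Real.Gamma x / (Real.Gamma x * Real.sqrt x) := by
        rw [mul_comm x, mul_div_mul_left _ _ hΓx.ne', Real.div_sqrt]
    _ ≤ x * Real.Gamma x / Real.Gamma (x + 1/2) := by
        apply div_le_div_of_nonneg_left (by positivity) hΓh h
  
lemma ratio_upper {x : ℝ} (hx : 0 < x) :
    Real.Gamma (x + 1) / Real.Gamma (x + 1/2) ≤ Real.sqrt (x + 1/2) := by
  have hΓh := Real.Gamma_pos_of_pos (by linarith : (0:ℝ) < x + 1/2)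
  have h := Gamma_half_le (by linarith : (0:ℝ) < x + 1/2)
  rw [show x + 1/2 + 1/2 = x + 1 by ring] at h
  rw [div_le_iff₀ hΓh]
  linarith [h]

set_option maxHeartbeats 2000000 in
lemma omega_bound (n : ℕ) (hn : 1 ≤ n) :
    |omega n - Real.sqrt (2 * (n:ℝ) + 2)| ≤ 3 / Real.sqrt n := by
  have hn1 : (1:ℝ) ≤ (n:ℝ) := by exact_mod_cast hn
  have hsn : 0 < Real.sqrt n := Real.sqrt_pos.mpr (by linarith)
  rcases Nat.even_or_odd n with he | ho
  · -- even case
    have hne : ¬ Odd n := Nat.not_odd_iff_even.mpr he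
    set x : ℝ := (n:ℝ)/2 with hx'
    have hx : (0:ℝ) < x := by simp only [hx']; linarith
    have hx1 : (1:ℝ)/2 ≤ x := by simp only [hx']; linarith
    have homega : omega n = (2*x + 1) / (Real.Gamma (x + 1) / Real.Gamma (x + 1/2)) := by
      rw [omega, if_neg hne]
      rw [show ((n:ℝ) + 1)/2 = x + 1/2 by rw [hx']; ring,
        show (n:ℝ)/2 + 1 = x + 1 by rw [hx'],
        show (n:ℝ) + 1 = 2*x + 1 by rw [hx']; ring]
      rw [div_div_eq_mul_div]
    have hn2 : 2 ≤ n := by rcases he with ⟨m, hm⟩; omega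
    have hx1' : (1:ℝ) ≤ x := by
      simp only [hx']
      have : (2:ℝ) ≤ (n:ℝ) := by exact_mod_cast hn2
      linarith
    set r : ℝ := Real.Gamma (x + 1) / Real.Gamma (x + 1/2) with hr'
    have hrl : Real.sqrt x ≤ r := ratio_lower hx
    have hru : r ≤ Real.sqrt (x + 1/2) := ratio_upper hx
    have hu0 : 0 < Real.sqrt x := Real.sqrt_pos.mpr hx
    have hr0 : 0 < r := lt_of_lt_of_le hu0 hrl
    set A : ℝ := Real.sqrt (2 * (n:ℝ) + 2) with hA'
    have hAeq : A = 2 * Real.sqrt (x + 1/2) := by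
      rw [hA', show 2 * (n:ℝ) + 2 = 4 * (x + 1/2) by rw [hx']; ring,
        Real.sqrt_mul (by norm_num : (0:ℝ) ≤ 4),
        show Real.sqrt 4 = 2 by
          rw [show (4:ℝ) = 2^2 by norm_num, Real.sqrt_sq (by norm_num : (0:ℝ) ≤ 2)]]
    have hlow : A ≤ omega n := by
      rw [homega, hAeq]
      have h1 : (2*x + 1) / Real.sqrt (x + 1/2) ≤ (2*x+1) / r :=
        div_le_div_of_nonneg_left (by linarith) hr0 hru
      have h2 : (2*x + 1) / Real.sqrt (x + 1/2) = 2 * Real.sqrt (x + 1/2) := by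
        rw [show 2*x + 1 = 2 * (x + 1/2) by ring, mul_div_assoc, Real.div_sqrt]
      linarith
    have hup : omega n ≤ A + 2 / Real.sqrt n := by
      rw [homega]
      have h1 : (2*x + 1) / r ≤ (2*x+1) / Real.sqrt x :=
        div_le_div_of_nonneg_left (by linarith) hu0 hrl
      set u : ℝ := Real.sqrt x with hu'
      set g : ℝ := Real.sqrt (4*x^2 + 2*x) with hg'
      have hg2 : g * g = 4*x^2 + 2*x := Real.mul_self_sqrt (by positivity)
      have hg0 : 0 ≤ g := Real.sqrt_nonneg _
      have hg : 2*x ≤ g := by nlinarith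
      have huA : u * A = g := by
        rw [hu', hA', ← Real.sqrt_mul hx.le,
          show x * (2 * (n:ℝ) + 2) = 4*x^2 + 2*x by rw [hx']; ring]
      have h2 : (2*x + 1) / u ≤ A + 1/u := by
        rw [div_le_iff₀ hu0]
        have : (A + 1/u) * u = u * A + 1 := by field_simp
        rw [this, huA]
        linarith
      have h3 : Real.sqrt (n:ℝ) ≤ 2 * u := by
        rw [show (n:ℝ) = 2 * x by rw [hx']; ring, Real.sqrt_mul (by norm_num : (0:ℝ) ≤ 2)]
        have hs2 : Real.sqrt 2 ≤ 2 := by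
          nlinarith [Real.sq_sqrt (show (0:ℝ) ≤ 2 by norm_num), Real.sqrt_nonneg 2]
        nlinarith [hu0.le]
      have h4 : 1/u ≤ 2 / Real.sqrt n := by
        rw [div_le_div_iff₀ hu0 hsn]
        linarith
      linarith
    have h23 : (2:ℝ) / Real.sqrt n ≤ 3 / Real.sqrt n := by gcongr <;> norm_num
    have h30 : (0:ℝ) ≤ 3 / Real.sqrt n := by positivity
    rw [abs_le]
    exact ⟨by linarith, by linarith⟩
  · -- odd case
    set x : ℝ := (n:ℝ)/2 with hx'
    have hx : (0:ℝ) < x := by simp only [hx']; linarith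
    set r : ℝ := Real.Gamma (x + 1) / Real.Gamma (x + 1/2) with hr'
    have hrl : Real.sqrt x ≤ r := ratio_lower hx
    have hru : r ≤ Real.sqrt (x + 1/2) := ratio_upper hx
    have hu0 : 0 < Real.sqrt x := Real.sqrt_pos.mpr hx
    have hr0 : 0 < r := lt_of_lt_of_le hu0 hrl
    set c : ℝ := (2*(n:ℝ) + 3) / ((n:ℝ) + 1) with hc'
    have hc2 : 2 ≤ c := by
      rw [hc', le_div_iff₀ (by linarith)]
      linarith
    have hcu : c ≤ 2 + 1/((n:ℝ)+1) := by
      rw [hc', div_le_iff₀ (by linarith)]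
      field_simp
      ring_nf
      nlinarith
    have homega : omega n = c * r := by
      rw [omega, if_pos ho, hc', hr']
      rw [show ((n:ℝ) + 1)/2 = x + 1/2 by rw [hx']; ring,
        show (n:ℝ)/2 + 1 = x + 1 by rw [hx']]
      rw [mul_div_assoc]
    set A : ℝ := Real.sqrt (2 * (n:ℝ) + 2) with hA'
    have hA2 : A * A = 2*(n:ℝ) + 2 := Real.mul_self_sqrt (by linarith)
    have hA0 : 0 < A := Real.sqrt_pos.mpr (by linarith)
    have hAn : Real.sqrt (n:ℝ) ≤ A := Real.sqrt_le_sqrt (by linarith)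
    have hup : omega n ≤ A + 1 / Real.sqrt n := by
      rw [homega]
      have hxx : Real.sqrt (x + 1/2) = A / 2 := by
        rw [hA', show x + 1/2 = (2 * (n:ℝ) + 2) * (1/4) by rw [hx']; ring,
          Real.sqrt_mul (by linarith), show Real.sqrt (1/4) = 1/2 by
            rw [show (1/4 : ℝ) = (1/2)^2 by norm_num, Real.sqrt_sq (by norm_num : (0:ℝ) ≤ 1/2)]]
        ring
      have h1 : c * r ≤ c * (A/2) := by
        rw [← hxx]
        exact mul_le_mul_of_nonneg_left hru (by linarith)
      have h2 : c * (A/2) = A + (c - 2) * (A/2) := by ring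
      have h3 : (c - 2) * (A/2) ≤ 1 / Real.sqrt n := by
        have hc3 : c - 2 ≤ 1/((n:ℝ)+1) := by linarith
        have h4 : (c-2) * (A/2) ≤ (1/((n:ℝ)+1)) * (A/2) :=
          mul_le_mul_of_nonneg_right hc3 (by linarith)
        have h5 : (1/((n:ℝ)+1)) * (A/2) = 1/A := by
          rw [eq_div_iff hA0.ne']
          field_simp
          nlinarith [hA2]
        have h6 : (1:ℝ)/A ≤ 1/Real.sqrt n := div_le_div_of_nonneg_left
          (by norm_num) hsn hAn
        linarith
      linarith
    have hlow : A - 1 / Real.sqrt n ≤ omega n := by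
      rw [homega]
      set B : ℝ := Real.sqrt (2 * (n:ℝ)) with hB'
      have hB2 : B * B = 2*(n:ℝ) := Real.mul_self_sqrt (by linarith)
      have hB0 : 0 < B := Real.sqrt_pos.mpr (by linarith)
      have hBn : Real.sqrt (n:ℝ) ≤ B := Real.sqrt_le_sqrt (by linarith)
      have h1 : B ≤ 2 * r := by
        have : B = 2 * Real.sqrt x := by
          rw [hB', show 2 * (n:ℝ) = 4 * x by rw [hx']; ring,
            Real.sqrt_mul (by norm_num : (0:ℝ) ≤ 4),
            show Real.sqrt 4 = 2 by
              rw [show (4:ℝ) = 2^2 by norm_num, Real.sqrt_sq (by norm_num : (0:ℝ) ≤ 2)]]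
        rw [this]
        linarith
      have h2 : 2 * r ≤ c * r := mul_le_mul_of_nonneg_right hc2 hr0.le
      have h3 : A - B ≤ 1 / Real.sqrt n := by
        have key : (A - B) * (A + B) = 2 := by nlinarith
        have hABge : 2 * Real.sqrt n ≤ A + B := by linarith
        have hABnn : 0 ≤ A - B := by nlinarith
        rw [le_div_iff₀ hsn]
        nlinarith
      linarith
    have h13 : (1:ℝ) / Real.sqrt n ≤ 3 / Real.sqrt n := by gcongr <;> norm_num
    rw [abs_le]
    exact ⟨by linarith, by linarith⟩

end piece6
section piece7

lemma SS_succ (N : ℕ) : SS (N + 1) = SS N + 1 / Real.sqrt ((N:ℝ) + 1) := by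
  rw [SS, SS, Finset.sum_range_succ]

lemma split_sum (n : ℕ) :
    SS (2*n+2) = (∑ k ∈ Finset.range (n + 1), 1 / Real.sqrt (2 * (k : ℝ) + 1))
      + (1 / Real.sqrt 2) * SS (n+1) := by
  induction n with
  | zero =>
      rw [SS, SS]
      norm_num [Finset.sum_range_succ, Real.sqrt_one]
  | succ m ih =>
      have e1 : SS (2*(m+1)+2) = SS (2*m+2) + 1/Real.sqrt (2*(m:ℝ)+3) + 1/Real.sqrt (2*(m:ℝ)+4) := by
        rw [show 2*(m+1)+2 = (2*m+2)+1+1 from by omega, SS_succ, SS_succ]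
        have c1 : ((2*m+2:ℕ):ℝ) + 1 = 2*(m:ℝ)+3 := by push_cast; ring
        have c2 : ((2*m+3:ℕ):ℝ) + 1 = 2*(m:ℝ)+4 := by push_cast; ring
        rw [c1, c2]
      have e2 : SS (m+1+1) = SS (m+1) + 1/Real.sqrt ((m:ℝ)+2) := by
        rw [SS_succ, show ((m+1:ℕ):ℝ) + 1 = (m:ℝ)+2 by push_cast; ring]
      have e3 : (∑ k ∈ Finset.range (m+1+1), 1/Real.sqrt (2*(k:ℝ)+1))
          = (∑ k ∈ Finset.range (m+1), 1/Real.sqrt (2*(k:ℝ)+1)) + 1/Real.sqrt (2*(m:ℝ)+3) := by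
        rw [Finset.sum_range_succ, show 2*((m+1:ℕ):ℝ)+1 = 2*(m:ℝ)+3 by push_cast; ring]
      have e4 : Real.sqrt (2*(m:ℝ)+4) = Real.sqrt 2 * Real.sqrt ((m:ℝ)+2) := by
        rw [← Real.sqrt_mul (by norm_num : (0:ℝ) ≤ 2), show (2:ℝ)*((m:ℝ)+2) = 2*(m:ℝ)+4 by ring]
      rw [e1, e2, e3, ih, e4]
      have hs2 : 0 < Real.sqrt 2 := Real.sqrt_pos.mpr (by norm_num)
      have hsm : 0 < Real.sqrt ((m:ℝ)+2) := Real.sqrt_pos.mpr (by positivity)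
      field_simp
      ring

lemma real_estimate (n : ℕ) (hn : 1 ≤ n) :
    |chi n + (1 - 1/Real.sqrt 2) * Lz| ≤ 10 / Real.sqrt n := by
  have hn1 : (1:ℝ) ≤ (n:ℝ) := by exact_mod_cast hn
  have hsn : 0 < Real.sqrt (n:ℝ) := Real.sqrt_pos.mpr (by linarith)
  have hs2 : 0 < Real.sqrt 2 := Real.sqrt_pos.mpr (by norm_num)
  have hs21 : 1 ≤ Real.sqrt 2 := by
    nlinarith [Real.mul_self_sqrt (show (0:ℝ) ≤ 2 by norm_num), hs2]
  have hE1 := SS_bound (2*n+2) (by omega)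
  have hE2 := SS_bound (n+1) (by omega)
  have hc1 : ((2*n+2:ℕ):ℝ) = 2*(n:ℝ)+2 := by push_cast; ring
  have hc2 : ((n+1:ℕ):ℝ) = (n:ℝ)+1 := by push_cast; ring
  rw [hc1] at hE1
  rw [hc2] at hE2
  have hO := omega_bound n hn
  have hcross : (2/Real.sqrt 2) * Real.sqrt ((n:ℝ)+1) = Real.sqrt (2*(n:ℝ)+2) := by
    rw [show 2*(n:ℝ)+2 = 2*((n:ℝ)+1) by ring, Real.sqrt_mul (by norm_num : (0:ℝ) ≤ 2)]
    rw [show (2:ℝ)/Real.sqrt 2 = Real.sqrt 2 by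
      rw [div_eq_iff hs2.ne', Real.mul_self_sqrt (by norm_num : (0:ℝ) ≤ 2)]]
  have hT := split_sum n
  have hid : chi n + (1 - 1/Real.sqrt 2) * Lz
      = (omega n - Real.sqrt (2*(n:ℝ)+2))
        - (SS (2*n+2) - 2*Real.sqrt (2*(n:ℝ)+2) - Lz)
        + (1/Real.sqrt 2) * (SS (n+1) - 2*Real.sqrt ((n:ℝ)+1) - Lz) := by
    rw [chi]
    linear_combination hT + hcross
  rw [hid]
  have hb1 : 2 / Real.sqrt (2*(n:ℝ)+2) ≤ 2 / Real.sqrt (n:ℝ) := by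
    apply div_le_div_of_nonneg_left (by norm_num) hsn
    exact Real.sqrt_le_sqrt (by linarith)
  have hb2 : (1/Real.sqrt 2) * (2 / Real.sqrt ((n:ℝ)+1)) ≤ 2 / Real.sqrt (n:ℝ) := by
    have h1 : (1:ℝ)/Real.sqrt 2 ≤ 1 := by
      rw [div_le_one hs2]; exact hs21
    have h2 : (2:ℝ) / Real.sqrt ((n:ℝ)+1) ≤ 2 / Real.sqrt (n:ℝ) := by
      apply div_le_div_of_nonneg_left (by norm_num) hsn
      exact Real.sqrt_le_sqrt (by linarith)
    have h3 : (0:ℝ) ≤ 2 / Real.sqrt ((n:ℝ)+1) := by positivity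
    calc (1/Real.sqrt 2) * (2 / Real.sqrt ((n:ℝ)+1)) ≤ 1 * (2 / Real.sqrt ((n:ℝ)+1)) :=
          mul_le_mul_of_nonneg_right h1 h3
      _ = 2 / Real.sqrt ((n:ℝ)+1) := by ring
      _ ≤ 2 / Real.sqrt (n:ℝ) := h2
  calc |(omega n - Real.sqrt (2*(n:ℝ)+2))
        - (SS (2*n+2) - 2*Real.sqrt (2*(n:ℝ)+2) - Lz)
        + (1/Real.sqrt 2) * (SS (n+1) - 2*Real.sqrt ((n:ℝ)+1) - Lz)|
      ≤ |omega n - Real.sqrt (2*(n:ℝ)+2)|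
        + |SS (2*n+2) - 2*Real.sqrt (2*(n:ℝ)+2) - Lz|
        + (1/Real.sqrt 2) * |SS (n+1) - 2*Real.sqrt ((n:ℝ)+1) - Lz| := by
        have h4 := abs_add_le ((omega n - Real.sqrt (2*(n:ℝ)+2))
          - (SS (2*n+2) - 2*Real.sqrt (2*(n:ℝ)+2) - Lz))
          ((1/Real.sqrt 2) * (SS (n+1) - 2*Real.sqrt ((n:ℝ)+1) - Lz))
        have h5 := abs_sub (omega n - Real.sqrt (2*(n:ℝ)+2))
          (SS (2*n+2) - 2*Real.sqrt (2*(n:ℝ)+2) - Lz)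
        have h6 : |(1/Real.sqrt 2) * (SS (n+1) - 2*Real.sqrt ((n:ℝ)+1) - Lz)|
            = (1/Real.sqrt 2) * |SS (n+1) - 2*Real.sqrt ((n:ℝ)+1) - Lz| := by
          rw [abs_mul, _root_.abs_of_nonneg (by positivity : (0:ℝ) ≤ 1/Real.sqrt 2)]
        rw [h6] at h4
        linarith
    _ ≤ 3 / Real.sqrt n + 2 / Real.sqrt n + 2 / Real.sqrt n := by
        have h9 : (1/Real.sqrt 2) * |SS (n+1) - 2*Real.sqrt ((n:ℝ)+1) - Lz|
            ≤ 2 / Real.sqrt (n:ℝ) :=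
          (mul_le_mul_of_nonneg_left hE2 (by positivity : (0:ℝ) ≤ 1/Real.sqrt 2)).trans hb2
        have h8 := hE1.trans hb1
        linarith
    _ ≤ 10 / Real.sqrt n := by
        rw [← add_div, ← add_div]
        gcongr
        norm_num


theorem chi_tendsto_negZ0 :
    ∃ C > 0, ∀ n : ℕ, 1 ≤ n →
      ‖(chi n : ℂ) + (1 - (2 : ℂ) ^ (-(1 : ℂ) / 2)) * riemannZeta (1 / 2)‖
        ≤ C / Real.sqrt n := by
  refine ⟨10, by norm_num, fun n hn => ?_⟩
  have h2c : (2 : ℂ) ^ (-(1 : ℂ) / 2) = ((1 / Real.sqrt 2 : ℝ) : ℂ) := by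
    rw [show (-(1:ℂ))/2 = -(1/2 : ℂ) by ring,
      show (2:ℂ) = (((2:ℝ)) : ℂ) by norm_num]
    exact cpow_neg_half_eq 2 (by norm_num)
  rw [zeta_half_real, h2c]
  have hcast : ((chi n : ℂ) + (1 - ((1 / Real.sqrt 2 : ℝ) : ℂ)) * ((Lz : ℝ) : ℂ))
      = (((chi n + (1 - 1/Real.sqrt 2) * Lz : ℝ)) : ℂ) := by
    push_cast
    ring
  rw [hcast, Complex.norm_real, Real.norm_eq_abs]
  exact real_estimate n hn

end piece7
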